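/- Let h ∈ L¹(ℝ⁴) with ∫|h| = K and let G : ℝ⁴ × ℝ⁴ → ℝ satisfy |G(x,y)| ≤ A + (1/(8π²)) log(1/|x-y|) for x ≠ y. If α·K < 32π², then for every bounded measurable set B ⊂ ℝ⁴ there is a constant C (depending on α, K, A, B) such that ∫_B exp(α ∫_{ℝ⁴} |G(x,y)| |h(y)| dy) dx ≤ C. -/

import Mathlib

/-!
Write `K = ∫ w` for the weight `w = |h|`. Jensen's inequality for the probability measure
`w / K` bounds `exp (α ∫ |G x y| w y dy)` by `K⁻¹ ∫ exp (α K |G x y|) w y dy`, and the logarithmic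
bound on `G` gives `exp (α K |G x y|) ≤ exp (α K A) ‖x - y‖ ^ (-β)` with `β = α K / (8 π²)`.
Integrating over `x ∈ B` and exchanging the integrals leaves `∫_B ‖x - y‖ ^ (-β) dx`, which is at
most `∫_{‖z‖ < 1} ‖z‖ ^ (-β) dz + |B|` for every `y`; this is finite exactly when `β < 4`,
i.e. when `α K < 32 π²`.
-/

open Real MeasureTheory Set Metric
open scoped ENNReal

section Jensen

variable {Y : Type*} [MeasurableSpace Y] {μ : Measure Y}

theorem ofReal_integral_le_lintegral_ofReal {f : Y → ℝ} (hf : Integrable f μ) :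
    ENNReal.ofReal (∫ y, f y ∂μ) ≤ ∫⁻ y, ENNReal.ofReal (f y) ∂μ := by
  rw [integral_eq_lintegral_pos_part_sub_lintegral_neg_part hf]
  exact (ENNReal.ofReal_le_ofReal (sub_le_self _ ENNReal.toReal_nonneg)).trans
    ENNReal.ofReal_toReal_le

theorem ofReal_integral_mul_exp_le_lintegral {g w : Y → ℝ} (hw : 0 ≤ w) (hwi : Integrable w μ)
    (hgw : Integrable (fun y => g y * w y) μ) :
    ENNReal.ofReal (∫ y, w y ∂μ) *
        ENNReal.ofReal (exp ((∫ y, g y * w y ∂μ) / ∫ y, w y ∂μ)) ≤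
      ∫⁻ y, ENNReal.ofReal (exp (g y) * w y) ∂μ := by
  set K := ∫ y, w y ∂μ
  set c := (∫ y, g y * w y ∂μ) / K
  rcases eq_or_ne K 0 with hK | hK
  · simp [hK]
  -- the tangent line of `exp` at `c`
  have tangent : ∀ y, exp c * (w y + g y * w y - c * w y) ≤ exp (g y) * w y := fun y => by
    calc exp c * (w y + g y * w y - c * w y) = exp c * ((g y - c) + 1) * w y := by ring
      _ ≤ exp c * exp (g y - c) * w y := by gcongr; exacts [hw y, add_one_le_exp _]
      _ = exp (g y) * w y := by rw [← exp_add, add_sub_cancel]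
  have hwgw : Integrable (fun y => w y + g y * w y) μ := hwi.add hgw
  have hint : ∫ y, exp c * (w y + g y * w y - c * w y) ∂μ = exp c * K := by
    rw [integral_const_mul, integral_sub hwgw (hwi.const_mul c),
      integral_add hwi hgw, integral_const_mul]
    have hcK : c * K = ∫ y, g y * w y ∂μ := div_mul_cancel₀ _ hK
    rw [← hcK]
    ring
  calc ENNReal.ofReal K * ENNReal.ofReal (exp c)
      = ENNReal.ofReal (∫ y, exp c * (w y + g y * w y - c * w y) ∂μ) := by
        rw [hint, mul_comm, ENNReal.ofReal_mul (exp_pos c).le]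
    _ ≤ ∫⁻ y, ENNReal.ofReal (exp c * (w y + g y * w y - c * w y)) ∂μ :=
        ofReal_integral_le_lintegral_ofReal ((hwgw.sub (hwi.const_mul c)).const_mul _)
    _ ≤ ∫⁻ y, ENNReal.ofReal (exp (g y) * w y) ∂μ :=
        lintegral_mono fun y => ENNReal.ofReal_le_ofReal (tangent y)

/-- If `g * w` is not integrable then `∫ g w` is `0` by convention, and the bound reduces to
`∫ w ≤ ∫ exp g * w`. -/
theorem ofReal_integral_mul_exp_le_lintegral_of_nonneg {g w : Y → ℝ} (hg : 0 ≤ g) (hw : 0 ≤ w)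
    (hwi : Integrable w μ) :
    ENNReal.ofReal (∫ y, w y ∂μ) *
        ENNReal.ofReal (exp ((∫ y, g y * w y ∂μ) / ∫ y, w y ∂μ)) ≤
      ∫⁻ y, ENNReal.ofReal (exp (g y) * w y) ∂μ := by
  by_cases hgw : Integrable (fun y => g y * w y) μ
  · exact ofReal_integral_mul_exp_le_lintegral hw hwi hgw
  rw [integral_undef hgw, zero_div, exp_zero, ENNReal.ofReal_one, mul_one,
    ofReal_integral_eq_lintegral_ofReal hwi (Filter.Eventually.of_forall hw)]
  exact lintegral_mono fun y => ENNReal.ofReal_le_ofReal <|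
    le_mul_of_one_le_left (hw y) (one_le_exp (hg y))

end Jensen

theorem exp_mul_le_exp_mul_rpow_neg {t a A c r : ℝ} (ht : 0 ≤ t) (hr : 0 < r)
    (ha : a ≤ A + c * log (1 / r)) : exp (t * a) ≤ exp (t * A) * r ^ (-(t * c)) := by
  rw [rpow_def_of_pos hr, ← exp_add, exp_le_exp, one_div, log_inv] at *
  nlinarith

theorem lintegral_lintegral_mul_le {X Y : Type*} [MeasurableSpace X] [MeasurableSpace Y]
    {μ : Measure X} {ν : Measure Y} [SFinite μ] [SFinite ν] {F : X → Y → ℝ≥0∞}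
    {φ : Y → ℝ≥0∞} (hF : Measurable (Function.uncurry F)) (hφ : AEMeasurable φ ν) {D : ℝ≥0∞}
    (hD : ∀ y, ∫⁻ x, F x y ∂μ ≤ D) :
    ∫⁻ x, ∫⁻ y, F x y * φ y ∂ν ∂μ ≤ D * ∫⁻ y, φ y ∂ν := by
  rw [lintegral_lintegral_swap (hF.aemeasurable.mul hφ.comp_snd),
    ← lintegral_const_mul'' D hφ]
  refine lintegral_mono fun y => ?_
  have hFy : Measurable (F · y) := hF.comp measurable_prodMk_right
  rw [lintegral_mul_const (φ y) hFy]
  gcongr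
  exact hD y

section Kernel

variable {E : Type*} [NormedAddCommGroup E] [MeasurableSpace E] [OpensMeasurableSpace E]
  [MeasurableAdd E] {μ : Measure E} [μ.IsAddRightInvariant]

theorem setLIntegral_comp_sub_le {f : E → ℝ≥0∞} (hf : ∀ z, 1 ≤ ‖z‖ → f z ≤ 1) (s : Set E)
    (y : E) : ∫⁻ x in s, f (x - y) ∂μ ≤ ∫⁻ z in ball 0 1, f z ∂μ + μ s := by
  have hsplit : ∀ z, f z ≤ (ball 0 1).indicator f z + 1 := fun z => by
    by_cases hz : z ∈ ball (0 : E) 1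
    · simp [indicator_of_mem hz]
    · simpa [indicator_of_notMem hz] using hf z (by simpa using hz)
  calc ∫⁻ x in s, f (x - y) ∂μ
      ≤ ∫⁻ x in s, ((ball 0 1).indicator f (x - y) + 1) ∂μ := lintegral_mono fun x => hsplit _
    _ = ∫⁻ x in s, (ball 0 1).indicator f (x - y) ∂μ + μ s := by
        rw [lintegral_add_right _ measurable_const, setLIntegral_one]
    _ ≤ ∫⁻ x, (ball 0 1).indicator f (x - y) ∂μ + μ s := by
        gcongr
        exact Measure.restrict_le_self
    _ = ∫⁻ z in ball 0 1, f z ∂μ + μ s := by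
        rw [lintegral_sub_right_eq_self, lintegral_indicator measurableSet_ball]

end Kernel

section LogPotential

variable {E : Type*} [NormedAddCommGroup E] [NormedSpace ℝ E] [FiniteDimensional ℝ E]
  [Nontrivial E] [MeasurableSpace E] [BorelSpace E] {μ : Measure E} [μ.IsAddHaarMeasure]

theorem lintegral_ball_rpow_neg_norm_lt_top {β : ℝ} (hβ : β < Module.finrank ℝ E) (r : ℝ) :
    ∫⁻ z in ball 0 r, ENNReal.ofReal (‖z‖ ^ (-β)) ∂μ < ∞ :=
  (integrableOn_ball_of_norm_le_rpow (f := fun z : E => ‖z‖ ^ (-β)) (C := 1)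
    Module.finrank_pos hβ
    (ae_of_all _ fun z => by simp [abs_of_nonneg (rpow_nonneg (norm_nonneg z) _)])
    (continuous_norm.measurable.pow_const _).aestronglyMeasurable).lintegral_lt_top

variable {G : E → E → ℝ} {A c : ℝ} {w : E → ℝ}

theorem ofReal_integral_mul_exp_potential_le
    (hG : ∀ x y, x ≠ y → |G x y| ≤ A + c * log (1 / ‖x - y‖))
    (hw : 0 ≤ w) (hwi : Integrable w μ) (hK : ∫ y, w y ∂μ ≠ 0) {α : ℝ} (hα : 0 ≤ α) (x : E) :
    ENNReal.ofReal (∫ y, w y ∂μ) * ENNReal.ofReal (exp (α * ∫ y, |G x y| * w y ∂μ)) ≤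
      ∫⁻ y, ENNReal.ofReal (exp (α * (∫ y, w y ∂μ) * A)) *
        ENNReal.ofReal (‖x - y‖ ^ (-(α * (∫ y, w y ∂μ) * c))) * ENNReal.ofReal (w y) ∂μ := by
  set K := ∫ y, w y ∂μ
  have hK0 : 0 ≤ K := integral_nonneg hw
  have hmean : (∫ y, α * K * |G x y| * w y ∂μ) / K = α * ∫ y, |G x y| * w y ∂μ := by
    simp_rw [mul_assoc, integral_const_mul]
    field_simp
  have hy : ∀ᵐ y ∂μ, y ≠ x := by simp [ae_iff]
  refine (hmean ▸ ofReal_integral_mul_exp_le_lintegral_of_nonneg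
    (fun y => by positivity) hw hwi).trans (lintegral_mono_ae ?_)
  filter_upwards [hy] with y hy
  have hxy : 0 < ‖x - y‖ := norm_pos_iff.2 (sub_ne_zero.2 hy.symm)
  rw [← ENNReal.ofReal_mul (exp_pos _).le, ← ENNReal.ofReal_mul (by positivity)]
  gcongr
  exacts [hw y, exp_mul_le_exp_mul_rpow_neg (by positivity) hxy (hG x y hy.symm)]

theorem setLIntegral_exp_potential_lt_top
    (hG : ∀ x y, x ≠ y → |G x y| ≤ A + c * log (1 / ‖x - y‖)) (hc : 0 ≤ c)
    (hw : 0 ≤ w) (hwi : Integrable w μ) {α : ℝ} (hα : 0 ≤ α)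
    (hαK : α * (∫ y, w y ∂μ) * c < Module.finrank ℝ E) {s : Set E} (hs : μ s < ∞) :
    ∫⁻ x in s, ENNReal.ofReal (exp (α * ∫ y, |G x y| * w y ∂μ)) ∂μ < ∞ := by
  set K := ∫ y, w y ∂μ
  rcases (integral_nonneg hw).eq_or_lt with hK | hK
  · have hw0 : w =ᵐ[μ] 0 := (integral_eq_zero_iff_of_nonneg hw hwi).1 hK.symm
    have hint : ∀ x, ∫ y, |G x y| * w y ∂μ = 0 := fun x =>
      integral_eq_zero_of_ae (hw0.mono fun y hy => by simp [hy])
    simpa [hint] using hs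
  set β := α * K * c
  have hβ : 0 ≤ β := by positivity
  set k : E → ℝ≥0∞ := fun z => ENNReal.ofReal (‖z‖ ^ (-β))
  set cA := ENNReal.ofReal (exp (α * K * A))
  have hk : ∀ z : E, 1 ≤ ‖z‖ → k z ≤ 1 := fun z hz =>
    ENNReal.ofReal_le_one.2 (rpow_le_one_of_one_le_of_nonpos hz (neg_nonpos.2 hβ))
  have hkm : Measurable (Function.uncurry fun x y : E => cA * k (x - y)) :=
    measurable_const.mul (((measurable_fst.sub measurable_snd).norm.pow_const _).ennreal_ofReal)
  have hconv : ∫⁻ x in s, ∫⁻ y, cA * k (x - y) * ENNReal.ofReal (w y) ∂μ ∂μ ≤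
      cA * (∫⁻ z in ball 0 1, k z ∂μ + μ s) * ENNReal.ofReal K := by
    rw [ofReal_integral_eq_lintegral_ofReal hwi (Filter.Eventually.of_forall hw)]
    refine lintegral_lintegral_mul_le hkm hwi.aemeasurable.ennreal_ofReal fun y => ?_
    rw [lintegral_const_mul' _ _ ENNReal.ofReal_ne_top]
    gcongr
    exact setLIntegral_comp_sub_le hk s y
  have hmul := (lintegral_const_mul' _ _ ENNReal.ofReal_ne_top).symm.trans_le <|
    (lintegral_mono (ofReal_integral_mul_exp_potential_le hG hw hwi hK.ne' hα)).trans hconv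
  refine ENNReal.lt_top_of_mul_ne_top_right (ne_top_of_le_ne_top ?_ hmul)
    (ENNReal.ofReal_pos.2 hK).ne'
  exact ENNReal.mul_ne_top (ENNReal.mul_ne_top ENNReal.ofReal_ne_top
    (ENNReal.add_ne_top.2 ⟨(lintegral_ball_rpow_neg_norm_lt_top hαK 1).ne, hs.ne⟩))
    ENNReal.ofReal_ne_top

end LogPotential

theorem exp_log_potential_integrable_general
    (h : EuclideanSpace ℝ (Fin 4) → ℝ) (hh : Integrable h)
    (K : ℝ) (hK : ∫ y, |h y| = K)
    (G : EuclideanSpace ℝ (Fin 4) → EuclideanSpace ℝ (Fin 4) → ℝ)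
    (A : ℝ)
    (hG : ∀ x y, x ≠ y → |G x y| ≤ A + (1 / (8 * π ^ 2)) * log (1 / ‖x - y‖))
    (α : ℝ) (hα : 0 < α) (hαK : α * K < 32 * π ^ 2)
    (B : Set (EuclideanSpace ℝ (Fin 4))) (hB : Bornology.IsBounded B) :
    ∃ C : ℝ, 0 < C ∧
      ∫⁻ x in B, ENNReal.ofReal (exp (α * ∫ y, |G x y| * |h y|)) ≤
        ENNReal.ofReal C := by
  have hβ : α * (∫ y, |h y|) * (1 / (8 * π ^ 2)) <
      Module.finrank ℝ (EuclideanSpace ℝ (Fin 4)) := by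
    rw [hK, finrank_euclideanSpace_fin, mul_one_div, div_lt_iff₀ (by positivity)]
    push_cast
    linarith
  have hfin := setLIntegral_exp_potential_lt_top hG (by positivity) (fun y => abs_nonneg (h y))
    hh.abs hα.le hβ hB.measure_lt_top
  exact ⟨_, by positivity,
    (ENNReal.le_ofReal_iff_toReal_le hfin.ne (by positivity)).2 (lt_add_one _).le⟩

theorem exp_log_potential_integrable
    (h : EuclideanSpace ℝ (Fin 4) → ℝ) (hh : Integrable h)
    (K : ℝ) (hK : ∫ y, |h y| = K)
    (G : EuclideanSpace ℝ (Fin 4) → EuclideanSpace ℝ (Fin 4) → ℝ)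
    (A : ℝ)
    (hG : ∀ x y, x ≠ y → |G x y| ≤ A + (1 / (8 * π ^ 2)) * log (1 / ‖x - y‖))
    (α : ℝ) (hα : 0 < α) (hαK : α * K < 32 * π ^ 2)
    (B : Set (EuclideanSpace ℝ (Fin 4))) (hB : Bornology.IsBounded B)
    (hBm : MeasurableSet B) :
    ∃ C : ℝ, 0 < C ∧
      ∫⁻ x in B, ENNReal.ofReal (exp (α * ∫ y, |G x y| * |h y|)) ≤
        ENNReal.ofReal C :=
  exp_log_potential_integrable_general h hh K hK G A hG α hα hαK B hB
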